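/- arXiv:1502.00732 — 2 statements merged into one kernel-verified Lean document; each statement's English description precedes it below -/
import Mathlib

section
/- Let n ≥ 1 be an integer and let C₀ > 0, C₁ > 0, and set K = C₀(1+C₁)·n·e. Then for all h ∈ (0,1] and all r ≥ 0 with K·r ≤ 1/2, the infinite sum over multi-indices α ∈ ℕⁿ with |α| > ⌊1/(C₁h)⌋ satisfies ∑_{α : |α| > ⌊1/(C₁h)⌋} (C₀^{|α|} (h^{-1} + |α|)^{|α|} / α!) · r^{|α|} ≤ 2ⁿ (in particular the sum converges). -/
open Finset
open scoped ENNReal NNReal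

-- multinomial bound: m! ≤ n^m * ∏ αᵢ!
lemma auxA (n : ℕ) (α : Fin n → ℕ) :
    (∑ i, α i).factorial ≤ n ^ (∑ i, α i) * ∏ i, (α i).factorial := by
  classical
  set m := ∑ i, α i with hm
  have hmem : α ∈ piAntidiag (univ : Finset (Fin n)) m := by
    simp [mem_piAntidiag, hm]
  have hmult : Nat.multinomial univ α ≤ n ^ m := by
    have := Finset.sum_pow_eq_sum_piAntidiag (univ : Finset (Fin n)) (fun _ => (1:ℕ)) m
    simp only [sum_const, card_univ, Fintype.card_fin, smul_eq_mul, mul_one, one_pow,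
      prod_const_one] at this
    calc Nat.multinomial univ α ≤ ∑ k ∈ piAntidiag (univ : Finset (Fin n)) m,
          Nat.multinomial univ k :=
        Finset.single_le_sum (fun k _ => Nat.zero_le _) hmem
      _ = n ^ m := this.symm
  have hspec := Nat.multinomial_spec (univ : Finset (Fin n)) α
  calc m.factorial = (∏ i, (α i).factorial) * Nat.multinomial univ α := hspec.symm
    _ ≤ (∏ i, (α i).factorial) * n ^ m := Nat.mul_le_mul_left _ hmult
    _ = n ^ m * ∏ i, (α i).factorial := mul_comm _ _

-- m^m ≤ m! * e^m
lemma auxB (m : ℕ) : (m : ℝ) ^ m ≤ (m.factorial : ℝ) * Real.exp 1 ^ m := by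
  have h := Real.pow_div_factorial_le_exp (x := (m:ℝ)) (Nat.cast_nonneg m) m
  rw [show ((m:ℝ)) = (m:ℝ)*1 by ring, Real.exp_nat_mul, mul_one] at h
  have hfac : (0:ℝ) < m.factorial := by exact_mod_cast m.factorial_pos
  rw [div_le_iff₀ hfac] at h
  linarith [h]

lemma auxC (n : ℕ) : ∑' α : Fin n → ℕ, ((2:ℝ≥0∞))⁻¹ ^ (∑ i, α i) = 2 ^ n := by
  induction n with
  | zero =>
      rw [tsum_eq_single (default : Fin 0 → ℕ)
        (fun b hb => absurd (Subsingleton.elim b default) hb)]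
      simp
  | succ n ih =>
      rw [← (Fin.consEquiv (fun _ : Fin (n+1) => ℕ)).tsum_eq]
      have : ∀ p : ℕ × (Fin n → ℕ),
          ((2:ℝ≥0∞))⁻¹ ^ (∑ i, ((Fin.consEquiv (fun _ : Fin (n+1) => ℕ)) p) i)
            = (2:ℝ≥0∞)⁻¹ ^ p.1 * (2:ℝ≥0∞)⁻¹ ^ (∑ i, p.2 i) := by
        intro p
        have h1 : ∑ i, ((Fin.consEquiv (fun _ : Fin (n+1) => ℕ)) p) i = p.1 + ∑ i, p.2 i := by
          simp [Fin.consEquiv, Fin.sum_cons]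
        rw [h1, pow_add]
      rw [tsum_congr this, ENNReal.tsum_prod']
      simp_rw [ENNReal.tsum_mul_left]
      rw [ih, ENNReal.tsum_mul_right, ENNReal.tsum_geometric, ENNReal.one_sub_inv_two, inv_inv,
        pow_succ]
      ring

lemma auxD (n : ℕ) :
    Summable (fun α : Fin n → ℕ => ((2:ℝ))⁻¹ ^ (∑ i, α i)) ∧
    ∑' α : Fin n → ℕ, ((2:ℝ))⁻¹ ^ (∑ i, α i) = 2 ^ n := by
  set f : (Fin n → ℕ) → ℝ≥0 := fun α => (2:ℝ≥0)⁻¹ ^ (∑ i, α i) with hf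
  have hcoe : ∀ α : Fin n → ℕ, ((f α : ℝ≥0) : ℝ≥0∞) = (2:ℝ≥0∞)⁻¹ ^ (∑ i, α i) := by
    intro α
    simp [f, ENNReal.coe_pow, ENNReal.coe_inv, inv_pow]
    rw [ENNReal.inv_pow]
  have htop : (∑' α : Fin n → ℕ, ((f α : ℝ≥0) : ℝ≥0∞)) = 2 ^ n := by
    rw [tsum_congr hcoe, auxC n]
  have hsum : Summable f :=
    ENNReal.tsum_coe_ne_top_iff_summable.mp (by
      rw [htop]; exact ENNReal.pow_ne_top ENNReal.ofNat_ne_top)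
  have htsum : (∑' α, f α : ℝ≥0) = 2 ^ n := by
    have := ENNReal.coe_tsum hsum
    rw [htop] at this
    have h2 : ((2 ^ n : ℝ≥0) : ℝ≥0∞) = 2 ^ n := by push_cast; ring
    exact_mod_cast this.trans h2.symm
  have heq : (fun α : Fin n → ℕ => ((2:ℝ))⁻¹ ^ (∑ i, α i)) = fun α => ((f α : ℝ≥0) : ℝ) := by
    funext α; simp [f]
  constructor
  · rw [heq]; exact NNReal.summable_coe.mpr hsum
  · rw [heq, ← NNReal.coe_tsum, htsum]; push_cast; ring

/-- The bound for the tail term `T₂` in the proof of Theorem 3.2 of Canzani–Toth: with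
`K = C₀(1+C₁)·n·e`, for `h ∈ (0,1]` and `0 ≤ r` with `K·r ≤ 1/2`, the sum over
multi-indices `α ∈ ℕⁿ` with `|α| > ⌊1/(C₁h)⌋` of `(C₀^{|α|}(h⁻¹+|α|)^{|α|}/α!)·r^{|α|}`
converges and is at most `2ⁿ`. -/
theorem stmt9 (n : ℕ) (hn : 1 ≤ n) (C₀ C₁ : ℝ) (hC₀ : 0 < C₀) (hC₁ : 0 < C₁) :
    ∀ h ∈ Set.Ioc (0:ℝ) 1, ∀ r : ℝ, 0 ≤ r →
      C₀ * (1 + C₁) * (n : ℝ) * Real.exp 1 * r ≤ 1 / 2 →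
      Summable (fun α : {α : Fin n → ℕ // Nat.floor (1 / (C₁ * h)) < ∑ i, α i} =>
          C₀ ^ (∑ i, α.1 i) * (h⁻¹ + ((∑ i, α.1 i : ℕ) : ℝ)) ^ (∑ i, α.1 i)
            / (∏ i, ((α.1 i).factorial : ℝ)) * r ^ (∑ i, α.1 i)) ∧
      ∑' α : {α : Fin n → ℕ // Nat.floor (1 / (C₁ * h)) < ∑ i, α i},
          C₀ ^ (∑ i, α.1 i) * (h⁻¹ + ((∑ i, α.1 i : ℕ) : ℝ)) ^ (∑ i, α.1 i)
            / (∏ i, ((α.1 i).factorial : ℝ)) * r ^ (∑ i, α.1 i)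
        ≤ 2 ^ n := by
  intro h hh r hr hKr
  obtain ⟨hh0, hh1⟩ := hh
  set t : {α : Fin n → ℕ // Nat.floor (1 / (C₁ * h)) < ∑ i, α i} → ℝ := fun α =>
    C₀ ^ (∑ i, α.1 i) * (h⁻¹ + ((∑ i, α.1 i : ℕ) : ℝ)) ^ (∑ i, α.1 i)
      / (∏ i, ((α.1 i).factorial : ℝ)) * r ^ (∑ i, α.1 i) with ht
  have hexp : (0:ℝ) < Real.exp 1 := Real.exp_pos 1
  -- nonnegativity
  have htnn : ∀ α, 0 ≤ t α := by
    intro α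
    have hXnn : (0:ℝ) ≤ h⁻¹ + ((∑ i, α.1 i : ℕ) : ℝ) := by positivity
    have hP : (0:ℝ) < ∏ i, ((α.1 i).factorial : ℝ) :=
      Finset.prod_pos fun i _ => by exact_mod_cast (α.1 i).factorial_pos
    positivity
  -- the key pointwise bound
  have hbound : ∀ α, t α ≤ ((2:ℝ))⁻¹ ^ (∑ i, α.1 i) := by
    intro α
    set m := ∑ i, α.1 i with hmdef
    have hP : (0:ℝ) < ∏ i, ((α.1 i).factorial : ℝ) :=
      Finset.prod_pos fun i _ => by exact_mod_cast (α.1 i).factorial_pos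
    have hfloor : (1 / (C₁ * h) : ℝ) < m :=
      (Nat.floor_lt (by positivity)).mp α.2
    have hinv : h⁻¹ ≤ C₁ * m := by
      have h1 : h⁻¹ = C₁ * (1 / (C₁ * h)) := by field_simp
      rw [h1]
      exact le_of_lt (by nlinarith)
    have hX : h⁻¹ + (m:ℝ) ≤ (1 + C₁) * m := by nlinarith
    have hXnn : (0:ℝ) ≤ h⁻¹ + (m:ℝ) := by positivity
    have hmm : (m:ℝ) ^ m ≤ (∏ i, ((α.1 i).factorial : ℝ)) * ((n:ℝ) * Real.exp 1) ^ m := by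
      calc (m:ℝ) ^ m ≤ (m.factorial : ℝ) * Real.exp 1 ^ m := auxB m
        _ ≤ ((n:ℝ) ^ m * ∏ i, ((α.1 i).factorial : ℝ)) * Real.exp 1 ^ m := by
            gcongr
            exact_mod_cast auxA n α.1
        _ = (∏ i, ((α.1 i).factorial : ℝ)) * ((n:ℝ) * Real.exp 1) ^ m := by
            rw [mul_pow]; ring
    have hnum : C₀ ^ m * (h⁻¹ + (m:ℝ)) ^ m * r ^ m
        ≤ (C₀ * (1 + C₁) * (n:ℝ) * Real.exp 1 * r) ^ m * (∏ i, ((α.1 i).factorial : ℝ)) := by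
      calc C₀ ^ m * (h⁻¹ + (m:ℝ)) ^ m * r ^ m
          ≤ C₀ ^ m * ((1 + C₁) * m) ^ m * r ^ m := by gcongr
        _ = C₀ ^ m * (1 + C₁) ^ m * (m:ℝ) ^ m * r ^ m := by rw [mul_pow]; ring
        _ ≤ C₀ ^ m * (1 + C₁) ^ m
            * ((∏ i, ((α.1 i).factorial : ℝ)) * ((n:ℝ) * Real.exp 1) ^ m) * r ^ m := by
            gcongr
        _ = (C₀ * (1 + C₁) * (n:ℝ) * Real.exp 1 * r) ^ m
            * (∏ i, ((α.1 i).factorial : ℝ)) := by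
            simp only [mul_pow]; ring
    have hstep : t α ≤ (C₀ * (1 + C₁) * (n:ℝ) * Real.exp 1 * r) ^ m := by
      rw [ht]
      simp only
      rw [div_mul_eq_mul_div, div_le_iff₀ hP]
      exact hnum
    refine hstep.trans ?_
    have hKnn : (0:ℝ) ≤ C₀ * (1 + C₁) * (n:ℝ) * Real.exp 1 * r := by positivity
    have : C₀ * (1 + C₁) * (n:ℝ) * Real.exp 1 * r ≤ (2:ℝ)⁻¹ := by
      rw [show ((2:ℝ))⁻¹ = 1 / 2 by norm_num]; exact hKr
    exact pow_le_pow_left₀ hKnn this m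
  -- comparison sums
  obtain ⟨hgsum, hgtsum⟩ := auxD n
  have hgsub : Summable (fun α : {α : Fin n → ℕ // Nat.floor (1 / (C₁ * h)) < ∑ i, α i} =>
      ((2:ℝ))⁻¹ ^ (∑ i, α.1 i)) :=
    hgsum.subtype {α : Fin n → ℕ | Nat.floor (1 / (C₁ * h)) < ∑ i, α i}
  have htsummable : Summable t := Summable.of_nonneg_of_le htnn hbound hgsub
  refine ⟨htsummable, ?_⟩
  calc ∑' α, t α ≤ ∑' α : {α : Fin n → ℕ // Nat.floor (1 / (C₁ * h)) < ∑ i, α i},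
        ((2:ℝ))⁻¹ ^ (∑ i, α.1 i) := Summable.tsum_le_tsum hbound htsummable hgsub
    _ ≤ ∑' α : Fin n → ℕ, ((2:ℝ))⁻¹ ^ (∑ i, α i) :=
        Summable.tsum_le_tsum_of_inj Subtype.val Subtype.val_injective
          (fun c _ => by positivity) (fun b => le_rfl) hgsub hgsum
    _ = 2 ^ n := hgtsum
end

section
/- Let n ≥ 1 be an integer, C₀ > 0, C₁ > 0, M > 0, and h ∈ (0,1]. Let (a_α)_{α∈ℕⁿ} be complex numbers satisfying |a_α| ≤ C₀^{|α|}(h^{-1}+|α|)^{|α|}·M for every multi-index α ∈ ℕⁿ. Then for every ζ ∈ ℂⁿ with max_i |ζ_i| ≤ 1/(2 C₀(1+C₁) n e), the series ∑_{α∈ℕⁿ} a_α ζ^α / α! converges absolutely and |∑_{α∈ℕⁿ} a_α ζ^α / α!| ≤ M · ( exp( n C₀ (1+1/C₁) (max_i |ζ_i|) / h ) + 2ⁿ ). -/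
/-!
Write `k = |α|` and `r = maxᵢ |ζᵢ|`. Splitting according to whether `k ≤ 1/(C₁h)` gives
`(h⁻¹ + k)^k ≤ ((1 + 1/C₁) h⁻¹)^k + ((1 + C₁) k)^k`. The first piece contributes
`(C₀ (1 + 1/C₁) r / h)^k / α!`, whose sum over `α ∈ ℕⁿ` factorises as `exp (C₀ (1 + 1/C₁) r / h)ⁿ`.
For the second, `k^k ≤ e^k k! ≤ (n e)^k α!` because multinomial coefficients are at most `n^k`,
so it contributes at most `(C₀ (1 + C₁) n e r)^k ≤ 2^{-k}`, whose sum over `α` is `2ⁿ`.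
-/

open Finset Real
open scoped Nat

theorem Nat.multinomial_univ_le_card_pow {ι : Type*} [Fintype ι] (f : ι → ℕ) :
    Nat.multinomial univ f ≤ Fintype.card ι ^ ∑ i, f i := by
  classical
  -- `card ι ^ k = (∑ i, 1) ^ k` is the sum of all multinomial coefficients of total degree `k`.
  have h := sum_pow_eq_sum_piAntidiag univ (fun _ : ι => (1 : ℕ)) (∑ i, f i)
  simp only [sum_const, smul_eq_mul, mul_one, one_pow, prod_const_one, Nat.cast_id] at h
  rw [← Finset.card_univ, h]
  exact single_le_sum (f := Nat.multinomial univ) (fun _ _ => Nat.zero_le _)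
    (mem_piAntidiag.2 ⟨rfl, fun i _ => mem_univ i⟩)

theorem Nat.factorial_sum_le_card_pow_mul_prod_factorial {ι : Type*} [Fintype ι] (f : ι → ℕ) :
    (∑ i, f i)! ≤ Fintype.card ι ^ (∑ i, f i) * ∏ i, (f i)! := by
  rw [← Nat.multinomial_spec, mul_comm]
  exact Nat.mul_le_mul_right _ (Nat.multinomial_univ_le_card_pow f)

theorem Real.pow_self_le_exp_one_pow_mul_factorial (k : ℕ) : (k : ℝ) ^ k ≤ exp 1 ^ k * k ! := by
  have h := pow_div_factorial_le_exp (k : ℝ) k.cast_nonneg k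
  rwa [div_le_iff₀ (by positivity), ← exp_one_pow] at h

theorem pow_sum_div_prod_factorial_le {ι : Type*} [Fintype ι] (f : ι → ℕ) :
    ((∑ i, f i : ℕ) : ℝ) ^ (∑ i, f i) / ∏ i, ((f i)! : ℝ) ≤
      (Fintype.card ι * exp 1) ^ ∑ i, f i := by
  have hP : (0 : ℝ) < ∏ i, ((f i)! : ℝ) := prod_pos fun i _ => by positivity
  have hfact : ((∑ i, f i)! : ℝ) ≤ (Fintype.card ι : ℝ) ^ (∑ i, f i) * ∏ i, ((f i)! : ℝ) := by
    exact_mod_cast Nat.factorial_sum_le_card_pow_mul_prod_factorial f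
  rw [div_le_iff₀ hP, mul_pow]
  calc ((∑ i, f i : ℕ) : ℝ) ^ (∑ i, f i) ≤ exp 1 ^ (∑ i, f i) * (∑ i, f i)! :=
        pow_self_le_exp_one_pow_mul_factorial _
    _ ≤ exp 1 ^ (∑ i, f i) * ((Fintype.card ι : ℝ) ^ (∑ i, f i) * ∏ i, ((f i)! : ℝ)) := by
        gcongr
    _ = _ := by ring

theorem add_pow_le_weighted_pow_add_pow {x y c : ℝ} (hx : 0 ≤ x) (hy : 0 ≤ y) (hc : 0 < c)
    (k : ℕ) : (x + y) ^ k ≤ ((1 + 1 / c) * x) ^ k + ((1 + c) * y) ^ k := by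
  rcases le_or_gt (c * y) x with hxy | hxy
  · have : x + y ≤ (1 + 1 / c) * x := by
      have : y ≤ x / c := by rw [le_div_iff₀ hc]; linarith
      linarith [one_div_mul_eq_div c x]
    calc (x + y) ^ k ≤ ((1 + 1 / c) * x) ^ k := by gcongr
      _ ≤ _ := le_add_of_nonneg_right (by positivity)
  · calc (x + y) ^ k ≤ ((1 + c) * y) ^ k := by gcongr; linarith
      _ ≤ _ := le_add_of_nonneg_left (by positivity)

theorem hasSum_fin_pi_prod_of_nonneg {β : Type*} {g : β → ℝ} (hg : ∀ b, 0 ≤ g b) {s : ℝ}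
    (hs : HasSum g s) (n : ℕ) : HasSum (fun α : Fin n → β => ∏ i, g (α i)) (s ^ n) := by
  induction n with
  | zero => simp
  | succ n ih =>
    have hprod_nonneg : 0 ≤ fun α : Fin n → β => ∏ i, g (α i) :=
      fun α => prod_nonneg fun i _ => hg (α i)
    have hsummable :=
      Summable.mul_of_nonneg hs.summable ih.summable (Pi.le_def.2 hg) hprod_nonneg
    have hprod := HasSum.mul hs ih hsummable
    rw [pow_succ', ← (Fin.consEquiv fun _ => β).hasSum_iff]
    simpa [Function.comp_def, Fin.prod_univ_succ] using hprod

theorem cauchy_estimate_term_le {n : ℕ} {C₀ C₁ M h r : ℝ} (hC₀ : 0 ≤ C₀) (hC₁ : 0 < C₁)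
    (hM : 0 ≤ M) (hh : 0 < h) (hr : 0 ≤ r) (hsmall : C₀ * (1 + C₁) * n * exp 1 * r ≤ 1 / 2)
    (α : Fin n → ℕ) :
    C₀ ^ (∑ i, α i) * (h⁻¹ + ((∑ i, α i : ℕ) : ℝ)) ^ (∑ i, α i) * M * r ^ (∑ i, α i)
        / ∏ i, ((α i)! : ℝ) ≤
      M * ∏ i, (C₀ * (1 + 1 / C₁) * r / h) ^ α i / (α i)! + M * ∏ i, (1 / 2 : ℝ) ^ α i := by
  set k := ∑ i, α i
  set P := ∏ i, ((α i)! : ℝ)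
  have hP : 0 < P := prod_pos fun i _ => by positivity
  have hsplit := add_pow_le_weighted_pow_add_pow (inv_nonneg.2 hh.le) k.cast_nonneg hC₁ k
  have hsecond : (C₀ * (1 + C₁) * r) ^ k * ((k : ℝ) ^ k / P) ≤ (1 / 2) ^ k := by
    calc (C₀ * (1 + C₁) * r) ^ k * ((k : ℝ) ^ k / P)
        ≤ (C₀ * (1 + C₁) * r) ^ k * (n * exp 1) ^ k := by
          gcongr
          exact (Fintype.card_fin n) ▸ pow_sum_div_prod_factorial_le α
      _ = (C₀ * (1 + C₁) * n * exp 1 * r) ^ k := by rw [← mul_pow]; ring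
      _ ≤ (1 / 2) ^ k := by gcongr
  calc C₀ ^ k * (h⁻¹ + k) ^ k * M * r ^ k / P
      ≤ C₀ ^ k * (((1 + 1 / C₁) * h⁻¹) ^ k + ((1 + C₁) * k) ^ k) * M * r ^ k / P := by
        gcongr
    _ = M * ((C₀ * (1 + 1 / C₁) * r / h) ^ k / P)
          + M * ((C₀ * (1 + C₁) * r) ^ k * ((k : ℝ) ^ k / P)) := by
        simp only [div_eq_mul_inv, mul_pow]
        ring
    _ ≤ M * ((C₀ * (1 + 1 / C₁) * r / h) ^ k / P) + M * (1 / 2) ^ k := by gcongr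
    _ = _ := by rw [prod_div_distrib, prod_pow_eq_pow_sum, prod_pow_eq_pow_sum]

theorem norm_mul_prod_pow_div_prod_factorial_le {𝕜 ι : Type*} [RCLike 𝕜] [Fintype ι]
    (c : 𝕜) {ζ : ι → 𝕜} {r : ℝ} (hζ : ∀ i, ‖ζ i‖ ≤ r) (α : ι → ℕ) :
    ‖c * (∏ i, ζ i ^ α i) / ∏ i, ((α i)! : 𝕜)‖ ≤ ‖c‖ * r ^ (∑ i, α i) / ∏ i, ((α i)! : ℝ) := by
  rw [norm_div, norm_mul, norm_prod, norm_prod, ← prod_pow_eq_pow_sum]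
  simp only [norm_pow, RCLike.norm_natCast]
  gcongr with i
  exact hζ i

theorem hasSum_exp_pow_add_two_pow {n : ℕ} {A : ℝ} (hA : 0 ≤ A) (M : ℝ) :
    HasSum (fun α : Fin n → ℕ => M * ∏ i, A ^ α i / (α i)! + M * ∏ i, (1 / 2 : ℝ) ^ α i)
      (M * (exp A ^ n + 2 ^ n)) := by
  have hexp : HasSum (fun k : ℕ => A ^ k / k !) (exp A) :=
    exp_eq_exp_ℝ ▸ NormedSpace.expSeries_div_hasSum_exp A
  have h1 := hasSum_fin_pi_prod_of_nonneg (fun k => by positivity) hexp n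
  have h2 := hasSum_fin_pi_prod_of_nonneg (fun k => by positivity) hasSum_geometric_two n
  rw [mul_add]
  exact (h1.mul_left M).add (h2.mul_left M)

theorem mul_le_half_of_le_one_div_two_mul {D r : ℝ} (hD : 0 ≤ D) (hr : r ≤ 1 / (2 * D)) :
    D * r ≤ 1 / 2 := by
  rcases hD.eq_or_lt with rfl | hDpos
  · norm_num
  · calc D * r ≤ D * (1 / (2 * D)) := by gcongr
      _ = 1 / 2 := by field_simp

theorem stmt10_general (n : ℕ) (C₀ C₁ M h : ℝ)
    (hC₀ : 0 < C₀) (hC₁ : 0 < C₁) (hM : 0 < M) (hh : h ∈ Set.Ioc (0:ℝ) 1)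
    (a : (Fin n → ℕ) → ℂ)
    (ha : ∀ α : Fin n → ℕ, norm (a α) ≤
      C₀ ^ (∑ i, α i) * (h⁻¹ + ((∑ i, α i : ℕ) : ℝ)) ^ (∑ i, α i) * M)
    (ζ : Fin n → ℂ)
    (hζ : (⨆ i, norm (ζ i)) ≤ 1 / (2 * C₀ * (1 + C₁) * (n : ℝ) * Real.exp 1)) :
    Summable (fun α : Fin n → ℕ =>
      norm (a α * (∏ i, ζ i ^ α i) / (∏ i, ((α i).factorial : ℂ)))) ∧
    norm (∑' α : Fin n → ℕ, a α * (∏ i, ζ i ^ α i) / (∏ i, ((α i).factorial : ℂ)))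
      ≤ M * (Real.exp ((n : ℝ) * C₀ * (1 + 1 / C₁) * (⨆ i, norm (ζ i)) / h) + 2 ^ n) := by
  set r := ⨆ i, ‖ζ i‖
  have hr : 0 ≤ r := Real.iSup_nonneg fun i => norm_nonneg _
  have hζr : ∀ i, ‖ζ i‖ ≤ r := le_ciSup (Set.finite_range _).bddAbove
  have hsmall : C₀ * (1 + C₁) * n * exp 1 * r ≤ 1 / 2 :=
    mul_le_half_of_le_one_div_two_mul (by positivity) (by simpa only [mul_assoc] using hζ)
  set A := C₀ * (1 + 1 / C₁) * r / h
  have hA : 0 ≤ A := div_nonneg (by positivity) hh.1.le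
  have hmajorant := hasSum_exp_pow_add_two_pow (n := n) hA M
  have hbound : ∀ α : Fin n → ℕ, ‖a α * (∏ i, ζ i ^ α i) / ∏ i, ((α i)! : ℂ)‖ ≤
      M * ∏ i, A ^ α i / (α i)! + M * ∏ i, (1 / 2 : ℝ) ^ α i := fun α =>
    calc _ ≤ ‖a α‖ * r ^ (∑ i, α i) / ∏ i, ((α i)! : ℝ) :=
          norm_mul_prod_pow_div_prod_factorial_le _ hζr α
      _ ≤ _ := by gcongr; exact ha α
      _ ≤ _ := cauchy_estimate_term_le hC₀.le hC₁ hM.le hh.1 hr hsmall α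
  refine ⟨hmajorant.summable.of_nonneg_of_le (fun _ => norm_nonneg _) hbound, ?_⟩
  have hexponent : exp A ^ n = exp (n * C₀ * (1 + 1 / C₁) * r / h) := by
    rw [← exp_nat_mul]; congr 1; ring
  exact hexponent ▸ tsum_of_norm_bounded hmajorant hbound

/-- The quantitative core of Theorem 3.2 of Canzani–Toth (complexification of the
Green's operator): if the Taylor coefficients satisfy the semiclassical Cauchy
estimates `|a_α| ≤ C₀^{|α|}(h⁻¹+|α|)^{|α|}·M`, then for `ζ ∈ ℂⁿ` with
`max_i |ζ_i| ≤ 1/(2C₀(1+C₁)ne)` the Taylor series converges absolutely and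
`|∑ a_α ζ^α/α!| ≤ M(exp(nC₀(1+1/C₁)(max_i |ζ_i|)/h) + 2ⁿ)`. -/
theorem stmt10 (n : ℕ) (hn : 1 ≤ n) (C₀ C₁ M h : ℝ)
    (hC₀ : 0 < C₀) (hC₁ : 0 < C₁) (hM : 0 < M) (hh : h ∈ Set.Ioc (0:ℝ) 1)
    (a : (Fin n → ℕ) → ℂ)
    (ha : ∀ α : Fin n → ℕ, norm (a α) ≤
      C₀ ^ (∑ i, α i) * (h⁻¹ + ((∑ i, α i : ℕ) : ℝ)) ^ (∑ i, α i) * M)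
    (ζ : Fin n → ℂ)
    (hζ : (⨆ i, norm (ζ i)) ≤ 1 / (2 * C₀ * (1 + C₁) * (n : ℝ) * Real.exp 1)) :
    Summable (fun α : Fin n → ℕ =>
      norm (a α * (∏ i, ζ i ^ α i) / (∏ i, ((α i).factorial : ℂ)))) ∧
    norm (∑' α : Fin n → ℕ, a α * (∏ i, ζ i ^ α i) / (∏ i, ((α i).factorial : ℂ)))
      ≤ M * (Real.exp ((n : ℝ) * C₀ * (1 + 1 / C₁) * (⨆ i, norm (ζ i)) / h) + 2 ^ n) :=
  stmt10_general n C₀ C₁ M h hC₀ hC₁ hM hh a ha ζ hζ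
end
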